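/- arXiv:1908.01168 — 5 statements merged into one kernel-verified Lean document; each statement's English description precedes it below -/
import Mathlib

section
/- Let λ ∈ (0, 1/2) and φ_λ(x) = ∫₀^∞ y^{-2λ} exp(-(y-x)²/2) dy. Then φ_λ is twice continuously differentiable and satisfies the ODE φ_λ''(x) + x·φ_λ'(x) + 2λ·φ_λ(x) = 0 for all x ∈ ℝ. -/
/-!
Differentiation under the integral sign is justified by the bound
`|p(y - x)| e^{-(y-x)²/2} ≤ C e^{-y²/8}`, uniform for `x` in a bounded set, and `y^c e^{-y²/8}`
is integrable on `(0, ∞)` as soon as `c > -1`. Differentiating `p(y - x) e^{-(y-x)²/2}` in `x`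
gives `(t p(t) - p'(t)) e^{-t²/2}` at `t = y - x`, so integrals of this shape with polynomial `p`
are closed under `d/dx` and `φ_λ` is smooth. With `c = -2λ`, the integrand of
`φ'' + x φ' + 2λ φ` is `-∂_y (y^{1+c} e^{-(y-x)²/2})`, whose integral over `(0, ∞)` vanishes
because `1 + c > 0`.
-/

open Real MeasureTheory Set
open Filter Topology Polynomial
open scoped ContDiff

theorem Polynomial.exists_abs_eval_le_mul_exp_abs (p : ℝ[X]) :
    ∃ M, ∀ t : ℝ, |p.eval t| ≤ M * exp |t| := by
  refine ⟨∑ i ∈ Finset.range (p.natDegree + 1), |p.coeff i| * i.factorial, fun t => ?_⟩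
  rw [eval_eq_sum_range, Finset.sum_mul]
  refine (Finset.abs_sum_le_sum_abs _ _).trans (Finset.sum_le_sum fun i _ => ?_)
  have hpow : |t| ^ i ≤ i.factorial * exp |t| := by
    have := Real.pow_div_factorial_le_exp _ (abs_nonneg t) i
    rwa [div_le_iff₀' (by positivity)] at this
  rw [abs_mul, abs_pow, mul_assoc]
  exact mul_le_mul_of_nonneg_left hpow (abs_nonneg _)

theorem exp_abs_sub_sub_sq_le {x B : ℝ} (hx : |x| ≤ B) (y : ℝ) :
    exp (|y - x| - (y - x) ^ 2 / 2) ≤ exp (1 + B ^ 2 / 4) * exp (-(1 / 8) * y ^ 2) := by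
  rw [← exp_add, exp_le_exp]
  have hxB : x ^ 2 ≤ B ^ 2 := sq_le_sq' (abs_le.1 hx).1 (abs_le.1 hx).2
  nlinarith [sq_nonneg (|y - x| - 2), sq_abs (y - x), sq_nonneg (y - 2 * x)]

noncomputable def rpowGaussConv (c : ℝ) (p : ℝ[X]) (x : ℝ) : ℝ :=
  ∫ y in Ioi (0 : ℝ), y ^ c * (p.eval (y - x) * exp (-(y - x) ^ 2 / 2))

theorem norm_rpow_mul_eval_mul_exp_le {p : ℝ[X]} {M : ℝ} (hM : ∀ t, |p.eval t| ≤ M * exp |t|)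
    (c : ℝ) {x B y : ℝ} (hx : |x| ≤ B) (hy : 0 ≤ y) :
    ‖y ^ c * (p.eval (y - x) * exp (-(y - x) ^ 2 / 2))‖ ≤
      M * exp (1 + B ^ 2 / 4) * (y ^ c * exp (-(1 / 8) * y ^ 2)) := by
  have hyc : 0 ≤ y ^ c := rpow_nonneg hy c
  calc ‖y ^ c * (p.eval (y - x) * exp (-(y - x) ^ 2 / 2))‖
      = y ^ c * (|p.eval (y - x)| * exp (-(y - x) ^ 2 / 2)) := by
        rw [norm_eq_abs, abs_mul, abs_mul, abs_of_nonneg hyc, abs_of_pos (exp_pos _)]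
    _ ≤ y ^ c * (M * exp |y - x| * exp (-(y - x) ^ 2 / 2)) := by
        gcongr
        exact hM _
    _ = y ^ c * (M * exp (|y - x| - (y - x) ^ 2 / 2)) := by
        rw [sub_eq_add_neg (|y - x|), exp_add, ← neg_div, mul_assoc]
    _ ≤ y ^ c * (M * (exp (1 + B ^ 2 / 4) * exp (-(1 / 8) * y ^ 2))) := by
        have hM0 : 0 ≤ M := nonneg_of_mul_nonneg_left ((abs_nonneg _).trans (hM 0)) (exp_pos _)
        gcongr
        exact exp_abs_sub_sub_sq_le hx y
    _ = M * exp (1 + B ^ 2 / 4) * (y ^ c * exp (-(1 / 8) * y ^ 2)) := by ring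

theorem aestronglyMeasurable_rpow_mul_restrict_Ioi (c : ℝ) {f : ℝ → ℝ} (hf : Continuous f) :
    AEStronglyMeasurable (fun y => y ^ c * f y) (volume.restrict (Ioi 0)) :=
  ((continuousOn_id.rpow_const fun _ hy => Or.inl (ne_of_gt hy)).mul
    hf.continuousOn).aestronglyMeasurable measurableSet_Ioi

theorem integrableOn_rpow_mul_eval_mul_exp {c : ℝ} (hc : -1 < c) (p : ℝ[X]) (x : ℝ) :
    IntegrableOn (fun y => y ^ c * (p.eval (y - x) * exp (-(y - x) ^ 2 / 2))) (Ioi 0) := by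
  obtain ⟨M, hM⟩ := p.exists_abs_eval_le_mul_exp_abs
  refine Integrable.mono'
    ((integrableOn_rpow_mul_exp_neg_mul_sq (by norm_num : (0 : ℝ) < 1 / 8) hc).const_mul
      (M * exp (1 + |x| ^ 2 / 4)))
    (aestronglyMeasurable_rpow_mul_restrict_Ioi c (by fun_prop)) ?_
  filter_upwards [ae_restrict_mem measurableSet_Ioi] with y hy
  exact norm_rpow_mul_eval_mul_exp_le hM c le_rfl (le_of_lt hy)

theorem hasDerivAt_eval_sub_mul_exp (p : ℝ[X]) (y x : ℝ) :
    HasDerivAt (fun x => p.eval (y - x) * exp (-(y - x) ^ 2 / 2))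
      ((X * p - derivative p).eval (y - x) * exp (-(y - x) ^ 2 / 2)) x := by
  have hsub : HasDerivAt (fun x => y - x) (-1) x := (hasDerivAt_id x).const_sub y
  have hp : HasDerivAt (fun x => p.eval (y - x)) (p.derivative.eval (y - x) * -1) x :=
    (p.hasDerivAt (y - x)).comp x hsub
  have hq : HasDerivAt (fun x => -(y - x) ^ 2 / 2) (y - x) x := by
    refine (((hsub.fun_pow 2).fun_neg).div_const 2).congr_deriv ?_
    norm_num
  refine (hp.mul hq.exp).congr_deriv ?_
  simp only [eval_sub, eval_mul, eval_X]
  ring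

theorem hasDerivAt_rpowGaussConv {c : ℝ} (hc : -1 < c) (p : ℝ[X]) (x₀ : ℝ) :
    HasDerivAt (rpowGaussConv c p) (rpowGaussConv c (X * p - derivative p) x₀) x₀ := by
  obtain ⟨M, hM⟩ := (X * p - derivative p).exists_abs_eval_le_mul_exp_abs
  have hball : ∀ x ∈ Metric.ball x₀ 1, |x| ≤ |x₀| + 1 := fun x hx => by
    have := abs_sub_abs_le_abs_sub x x₀
    rw [Metric.mem_ball, dist_eq_norm, norm_eq_abs] at hx
    linarith
  refine (hasDerivAt_integral_of_dominated_loc_of_deriv_le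
    (F := fun x y => y ^ c * (p.eval (y - x) * exp (-(y - x) ^ 2 / 2)))
    (F' := fun x y => y ^ c * ((X * p - derivative p).eval (y - x) * exp (-(y - x) ^ 2 / 2)))
    (Metric.ball_mem_nhds x₀ one_pos)
    (Eventually.of_forall fun x => aestronglyMeasurable_rpow_mul_restrict_Ioi c (by fun_prop))
    (integrableOn_rpow_mul_eval_mul_exp hc p x₀)
    (aestronglyMeasurable_rpow_mul_restrict_Ioi c (by fun_prop)) ?_
    ((integrableOn_rpow_mul_exp_neg_mul_sq (by norm_num : (0 : ℝ) < 1 / 8) hc).const_mul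
      (M * exp (1 + (|x₀| + 1) ^ 2 / 4))) ?_).2
  · filter_upwards [ae_restrict_mem measurableSet_Ioi] with y hy x hx
    exact norm_rpow_mul_eval_mul_exp_le hM c (hball x hx) (le_of_lt hy)
  · exact Eventually.of_forall fun y x _ => (hasDerivAt_eval_sub_mul_exp p y x).const_mul _

theorem deriv_rpowGaussConv {c : ℝ} (hc : -1 < c) (p : ℝ[X]) :
    deriv (rpowGaussConv c p) = rpowGaussConv c (X * p - derivative p) :=
  funext fun x => (hasDerivAt_rpowGaussConv hc p x).deriv

theorem contDiff_rpowGaussConv {c : ℝ} (hc : -1 < c) (p : ℝ[X]) :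
    ContDiff ℝ ∞ (rpowGaussConv c p) := by
  refine contDiff_infty.2 fun n => ?_
  induction n generalizing p with
  | zero => exact contDiff_zero.2 <| continuous_iff_continuousAt.2 fun x =>
      (hasDerivAt_rpowGaussConv hc p x).continuousAt
  | succ n ih =>
    rw [Nat.cast_succ, contDiff_succ_iff_deriv, deriv_rpowGaussConv hc]
    exact ⟨fun x => (hasDerivAt_rpowGaussConv hc p x).differentiableAt, by simp, ih _⟩

theorem rpowGaussConv_add {c : ℝ} (hc : -1 < c) (p q : ℝ[X]) (x : ℝ) :
    rpowGaussConv c (p + q) x = rpowGaussConv c p x + rpowGaussConv c q x := by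
  simp only [rpowGaussConv, eval_add, add_mul, mul_add]
  exact integral_add (integrableOn_rpow_mul_eval_mul_exp hc p x)
    (integrableOn_rpow_mul_eval_mul_exp hc q x)

theorem rpowGaussConv_sub {c : ℝ} (hc : -1 < c) (p q : ℝ[X]) (x : ℝ) :
    rpowGaussConv c (p - q) x = rpowGaussConv c p x - rpowGaussConv c q x := by
  simp only [rpowGaussConv, eval_sub, sub_mul, mul_sub]
  exact integral_sub (integrableOn_rpow_mul_eval_mul_exp hc p x)
    (integrableOn_rpow_mul_eval_mul_exp hc q x)

theorem rpowGaussConv_C_mul (c a : ℝ) (p : ℝ[X]) (x : ℝ) :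
    rpowGaussConv c (C a * p) x = a * rpowGaussConv c p x := by
  simp only [rpowGaussConv, eval_mul, eval_C, ← integral_const_mul]
  congr 1 with y
  ring

theorem rpowGaussConv_X_mul_X_add_C_sub_C {c : ℝ} (hc : -1 < c) (x : ℝ) :
    rpowGaussConv c (X * (X + C x) - C (1 + c)) x = 0 := by
  set g : ℝ → ℝ := fun y => y ^ (1 + c) * exp (-(y - x) ^ 2 / 2)
  have hg : EqOn (fun y => y ^ c * ((X + C x).eval (y - x) * exp (-(y - x) ^ 2 / 2))) g
      (Ioi 0) := fun y (hy : 0 < y) => by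
    simp only [g, rpow_add hy, rpow_one, eval_add, eval_X, eval_C]
    ring
  have hderiv : ∀ y ∈ Ioi (0 : ℝ), HasDerivAt g
      (-(y ^ c * ((X * (X + C x) - C (1 + c)).eval (y - x) * exp (-(y - x) ^ 2 / 2)))) y := by
    intro y (hy : 0 < y)
    have hq : HasDerivAt (fun y => -(y - x) ^ 2 / 2) (-(y - x)) y := by
      refine ((((hasDerivAt_id y).sub_const x).fun_pow 2).fun_neg.div_const 2).congr_deriv ?_
      norm_num
      ring
    refine ((hasDerivAt_rpow_const (p := 1 + c) (Or.inl hy.ne')).mul hq.exp).congr_deriv ?_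
    simp only [add_sub_cancel_left, rpow_add hy, rpow_one, eval_sub, eval_mul, eval_add, eval_X,
      eval_C]
    ring
  have hint := (integrableOn_rpow_mul_eval_mul_exp hc (X * (X + C x) - C (1 + c)) x).neg
  have hlim : Tendsto g atTop (𝓝 0) := tendsto_zero_of_hasDerivAt_of_integrableOn_Ioi hderiv hint
    ((integrableOn_rpow_mul_eval_mul_exp hc (X + C x) x).congr_fun hg measurableSet_Ioi)
  have hcont : ContinuousWithinAt g (Ici 0) 0 :=
    (continuousWithinAt_id.rpow_const (Or.inr (by linarith))).mul
      (Continuous.continuousWithinAt (by fun_prop))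
  have hFTC := integral_Ioi_of_hasDerivAt_of_tendsto hcont hderiv hint hlim
  rw [integral_neg] at hFTC
  simp only [g, zero_rpow (by linarith : 1 + c ≠ 0), zero_mul, sub_zero, neg_eq_zero] at hFTC
  exact hFTC

theorem rpowGaussConv_ode {c : ℝ} (hc : -1 < c) (x : ℝ) :
    rpowGaussConv c (X * X - 1) x + x * rpowGaussConv c X x - c * rpowGaussConv c 1 x = 0 := by
  have hpoly : X * (X + C x) - C (1 + c) = (X * X - 1 + C x * X) - C c * 1 := by
    simp only [C_add, C_1]
    ring
  have h := rpowGaussConv_X_mul_X_add_C_sub_C hc x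
  rwa [hpoly, rpowGaussConv_sub hc (X * X - 1 + C x * X), rpowGaussConv_add hc,
    rpowGaussConv_C_mul, rpowGaussConv_C_mul] at h

theorem stmt_1_general (l : ℝ) (hl2 : l < 1/2)
    (φ : ℝ → ℝ)
    (hφ : ∀ x : ℝ, φ x = ∫ y in Ioi (0:ℝ), y ^ (-(2*l)) * Real.exp (-(y - x)^2 / 2)) :
    ContDiff ℝ 2 φ ∧
    ∀ x : ℝ, deriv (deriv φ) x + x * deriv φ x + 2 * l * φ x = 0 := by
  have hc : -1 < -(2 * l) := by linarith
  obtain rfl : φ = rpowGaussConv (-(2 * l)) 1 := funext fun x => by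
    simp only [hφ, rpowGaussConv, eval_one, one_mul]
  refine ⟨contDiff_infty.1 (contDiff_rpowGaussConv hc 1) 2, fun x => ?_⟩
  simp only [deriv_rpowGaussConv hc, mul_one, derivative_one, sub_zero, derivative_X]
  linear_combination rpowGaussConv_ode hc x

theorem stmt_1 (l : ℝ) (hl : 0 < l) (hl2 : l < 1/2)
    (φ : ℝ → ℝ)
    (hφ : ∀ x : ℝ, φ x = ∫ y in Ioi (0:ℝ), y ^ (-(2*l)) * Real.exp (-(y - x)^2 / 2)) :
    ContDiff ℝ 2 φ ∧
    ∀ x : ℝ, deriv (deriv φ) x + x * deriv φ x + 2 * l * φ x = 0 :=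
  stmt_1_general l hl2 φ hφ
end

section
/- Let λ ∈ (0, 1/2) and φ_λ(x) = ∫₀^∞ y^{-2λ} exp(-(y-x)²/2) dy. Then φ_λ''(−1) = ∫₀^∞ y^{-2λ}·((y+1)² − 1)·exp(−(y+1)²/2) dy > 0. -/
open Real MeasureTheory Set

/-! The kernels `e(u) = exp(-u²/2)`, `u e(u)` and `(u² - 1) e(u)` satisfy
`d/dx K(y - x) = L(y - x)` along this chain, and all have Gaussian decay. For `x` near `-1` and
`y > 0` we have `(y - x)² ≥ y²`, so each `y^(-2λ) K(y - x)` is dominated by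
`C y^(-2λ) exp(-b y²)`, integrable on `(0, ∞)` because `-2λ > -1`. Differentiating twice under
the integral gives the formula, and the integrand `y^(-2λ) ((y + 1)² - 1) e(y + 1)` is positive
for `y > 0`. -/

def HasGaussianDecay (K : ℝ → ℝ) : Prop :=
  ∃ C b : ℝ, 0 < b ∧ ∀ u, |K u| ≤ C * exp (-b * u ^ 2)

lemma hasGaussianDecay_mul_exp {p : ℝ → ℝ} {C : ℝ}
    (hp : ∀ u, |p u| ≤ C * exp (u ^ 2 / 4)) :
    HasGaussianDecay fun u => p u * exp (-u ^ 2 / 2) := by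
  refine ⟨C, 1 / 4, by norm_num, fun u => ?_⟩
  calc |p u * exp (-u ^ 2 / 2)| = |p u| * exp (-u ^ 2 / 2) := by
        rw [abs_mul, abs_of_pos (exp_pos _)]
    _ ≤ C * exp (u ^ 2 / 4) * exp (-u ^ 2 / 2) := by gcongr; exact hp u
    _ = C * exp (-(1 / 4) * u ^ 2) := by rw [mul_assoc, ← exp_add]; ring_nf

lemma hasGaussianDecay_exp : HasGaussianDecay fun u => exp (-u ^ 2 / 2) :=
  ⟨1, 1 / 2, by norm_num, fun u => by rw [abs_of_pos (exp_pos _)]; ring_nf; exact le_rfl⟩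

lemma hasGaussianDecay_id_mul_exp : HasGaussianDecay fun u => u * exp (-u ^ 2 / 2) :=
  hasGaussianDecay_mul_exp (C := 1) fun u => by
    have := add_one_le_exp (u ^ 2 / 4)
    nlinarith [sq_nonneg (|u| - 2), sq_abs u]

lemma hasGaussianDecay_sq_sub_one_mul_exp :
    HasGaussianDecay fun u => (u ^ 2 - 1) * exp (-u ^ 2 / 2) :=
  hasGaussianDecay_mul_exp (C := 4) fun u => by
    have := add_one_le_exp (u ^ 2 / 4)
    rw [abs_le]
    constructor <;> nlinarith [sq_nonneg u]

lemma hasDerivAt_exp_neg_sq_half (u : ℝ) :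
    HasDerivAt (fun u => exp (-u ^ 2 / 2)) (-(u * exp (-u ^ 2 / 2))) u := by
  refine ((hasDerivAt_pow 2 u).neg.div_const 2).exp.congr_deriv ?_
  simp only [Pi.neg_apply]
  ring

lemma hasDerivAt_id_mul_exp_neg_sq_half (u : ℝ) :
    HasDerivAt (fun u => u * exp (-u ^ 2 / 2)) (-((u ^ 2 - 1) * exp (-u ^ 2 / 2))) u := by
  refine ((hasDerivAt_id u).mul (hasDerivAt_exp_neg_sq_half u)).congr_deriv ?_
  simp only [id, one_mul]
  ring

section RpowWeight

variable {s : ℝ} {K : ℝ → ℝ}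

lemma norm_rpow_mul_comp_sub_le {C b : ℝ} (hb : 0 < b)
    (hK : ∀ u, |K u| ≤ C * exp (-b * u ^ 2)) {x y : ℝ} (hx : x ≤ 0) (hy : 0 < y) :
    ‖y ^ s * K (y - x)‖ ≤ C * (y ^ s * exp (-b * y ^ 2)) := by
  have hys : 0 < y ^ s := rpow_pos_of_pos hy s
  have hsq : y ^ 2 ≤ (y - x) ^ 2 := by nlinarith
  have hdecay : exp (-b * (y - x) ^ 2) ≤ exp (-b * y ^ 2) :=
    exp_le_exp.2 <| by nlinarith [mul_le_mul_of_nonneg_left hsq hb.le]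
  calc ‖y ^ s * K (y - x)‖ = y ^ s * |K (y - x)| := by
        rw [norm_mul, norm_of_nonneg hys.le, norm_eq_abs]
    _ ≤ y ^ s * (C * exp (-b * (y - x) ^ 2)) := by gcongr; exact hK _
    _ ≤ y ^ s * (C * exp (-b * y ^ 2)) := by
        have : 0 ≤ C := nonneg_of_mul_nonneg_left ((abs_nonneg _).trans (hK 0)) (exp_pos _)
        gcongr
    _ = C * (y ^ s * exp (-b * y ^ 2)) := by ring

lemma aestronglyMeasurable_rpow_mul_comp_sub (hK : Continuous K) (x : ℝ) :
    AEStronglyMeasurable (fun y => y ^ s * K (y - x)) (volume.restrict (Ioi 0)) := by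
  fun_prop

lemma integrableOn_rpow_mul_comp_sub (hs : -1 < s) (hKc : Continuous K) (hK : HasGaussianDecay K)
    {x : ℝ} (hx : x ≤ 0) : IntegrableOn (fun y => y ^ s * K (y - x)) (Ioi 0) := by
  obtain ⟨C, b, hb, hKb⟩ := hK
  refine ((integrableOn_rpow_mul_exp_neg_mul_sq hb hs).const_mul C).mono'
    (aestronglyMeasurable_rpow_mul_comp_sub hKc x) ?_
  exact ae_restrict_of_forall_mem measurableSet_Ioi fun y hy =>
    norm_rpow_mul_comp_sub_le hb hKb hx hy

lemma hasDerivAt_integral_rpow_mul_comp_sub (hs : -1 < s) {L : ℝ → ℝ}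
    (hKL : ∀ u, HasDerivAt K (-L u) u) (hK : HasGaussianDecay K)
    (hLc : Continuous L) (hL : HasGaussianDecay L) {x₀ : ℝ} (hx₀ : x₀ < 0) :
    HasDerivAt (fun x => ∫ y in Ioi 0, y ^ s * K (y - x))
      (∫ y in Ioi 0, y ^ s * L (y - x₀)) x₀ := by
  have hKc : Continuous K := continuous_iff_continuousAt.2 fun u => (hKL u).continuousAt
  obtain ⟨C, b, hb, hLb⟩ := hL
  refine (hasDerivAt_integral_of_dominated_loc_of_deriv_le (Iio_mem_nhds hx₀)
    (F' := fun x y => y ^ s * L (y - x)) (bound := fun y => C * (y ^ s * exp (-b * y ^ 2)))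
    (.of_forall fun x => aestronglyMeasurable_rpow_mul_comp_sub hKc x)
    (integrableOn_rpow_mul_comp_sub hs hKc hK hx₀.le)
    (aestronglyMeasurable_rpow_mul_comp_sub hLc x₀) ?_
    ((integrableOn_rpow_mul_exp_neg_mul_sq hb hs).const_mul C) ?_).2
  · exact ae_restrict_of_forall_mem measurableSet_Ioi fun y hy x hx =>
      norm_rpow_mul_comp_sub_le hb hLb (le_of_lt hx) hy
  · refine .of_forall fun y x _ => ?_
    refine (((hKL (y - x)).comp x ((hasDerivAt_id x).const_sub y)).const_mul (y ^ s)).congr_deriv ?_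
    ring

end RpowWeight

lemma setIntegral_pos_of_forall_pos {α : Type*} [MeasurableSpace α] {μ : Measure α} {s : Set α}
    {f : α → ℝ} (hs : MeasurableSet s) (hμs : μ s ≠ 0) (hf : IntegrableOn f s μ)
    (hpos : ∀ y ∈ s, 0 < f y) : 0 < ∫ y in s, f y ∂μ := by
  refine (setIntegral_pos_iff_support_of_nonneg_ae
    (ae_restrict_of_forall_mem hs fun y hy => (hpos y hy).le) hf).2 ?_
  have hsupp : Function.support f ∩ s = s := inter_eq_right.2 fun y hy => (hpos y hy).ne'
  rw [hsupp]
  exact pos_iff_ne_zero.2 hμs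

theorem stmt_4 (l : ℝ) (hl : 0 < l) (hl2 : l < 1/2)
    (φ : ℝ → ℝ)
    (hφ : ∀ x : ℝ, φ x = ∫ y in Ioi (0:ℝ), y ^ (-(2*l)) * Real.exp (-(y - x)^2 / 2)) :
    deriv (deriv φ) (-1) =
      ∫ y in Ioi (0:ℝ), y ^ (-(2*l)) * ((y + 1)^2 - 1) * Real.exp (-(y + 1)^2 / 2) ∧
    0 < deriv (deriv φ) (-1) := by
  have hs : -1 < -(2 * l) := by linarith
  have hφ' : deriv φ =ᶠ[nhds (-1)] fun x =>
      ∫ y in Ioi 0, y ^ (-(2 * l)) * ((y - x) * exp (-(y - x) ^ 2 / 2)) := by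
    filter_upwards [Iio_mem_nhds (show (-1 : ℝ) < 0 by norm_num)] with x hx
    rw [funext hφ]
    exact (hasDerivAt_integral_rpow_mul_comp_sub hs hasDerivAt_exp_neg_sq_half
      hasGaussianDecay_exp (by fun_prop) hasGaussianDecay_id_mul_exp hx).deriv
  have hφ'' := hasDerivAt_integral_rpow_mul_comp_sub hs hasDerivAt_id_mul_exp_neg_sq_half
    hasGaussianDecay_id_mul_exp (by fun_prop) hasGaussianDecay_sq_sub_one_mul_exp
    (show (-1 : ℝ) < 0 by norm_num)
  have hint := integrableOn_rpow_mul_comp_sub hs (by fun_prop)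
    hasGaussianDecay_sq_sub_one_mul_exp (show (-1 : ℝ) ≤ 0 by norm_num)
  rw [hφ'.deriv_eq, hφ''.deriv]
  simp only [sub_neg_eq_add, ← mul_assoc, true_and] at hint ⊢
  refine setIntegral_pos_of_forall_pos measurableSet_Ioi (by simp) hint fun y hy => ?_
  have hy : 0 < y := hy
  have : 0 < (y + 1) ^ 2 - 1 := by nlinarith
  positivity
end

section
/- Define g(λ) = ∫₁^∞ ((t+1)^{-2λ} + (t−1)^{-2λ})(t²−1)exp(−t²/2) dt for λ ∈ (0, 1/2). Then g is strictly convex on (0, 1/2), and lim_{λ→0⁺} g(λ) = lim_{λ→1/2⁻} g(λ) = 2·exp(−1/2); consequently g(λ) < 2·exp(−1/2) for all λ ∈ (0, 1/2). -/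
/-!
For fixed `t > 1` the integrand is a positive multiple of `(t + 1) ^ (-2λ) + (t - 1) ^ (-2λ)`,
a sum of two exponentials in `λ`, the first with base `≠ 1`; so it is strictly convex in `λ`,
and integrating against a nonzero measure preserves strict convexity. For `λ ∈ [0, 1/2]` the
integrand is dominated by `3 t² e^(-t²/2)`, hence `g` is continuous on `[0, 1/2]` and the one-sided
limits are `g 0 = 2 ∫ (t² - 1) e^(-t²/2)` and `g (1/2) = 2 ∫ t e^(-t²/2)`; both equal
`2 e^(-1/2)`, with antiderivatives `-t e^(-t²/2)` and `-e^(-t²/2)`. Finally, a convex function on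
`(a, b)` is bounded by the maximum of its values at any two points around `x`; letting them tend
to `a` and `b` bounds it by the common limit, and strict convexity makes the bound strict.
-/

open Real MeasureTheory Set Filter Topology

theorem StrictConvexOn.mul_const {E : Type*} [AddCommGroup E] [Module ℝ E] {s : Set E}
    {f : E → ℝ} (hf : StrictConvexOn ℝ s f) {c : ℝ} (hc : 0 < c) :
    StrictConvexOn ℝ s fun x => f x * c := by
  refine ⟨hf.1, fun x hx y hy hxy a b ha hb hab => ?_⟩
  have := mul_lt_mul_of_pos_right (hf.2 hx hy hxy ha hb hab) hc
  simp only [smul_eq_mul] at this ⊢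
  linarith

theorem strictConvexOn_rpow_left_mul {b c : ℝ} (hb₀ : 0 < b) (hb₁ : b ≠ 1) (hc : c ≠ 0) :
    StrictConvexOn ℝ univ fun x : ℝ => b ^ (c * x) := by
  have hk : log b * c ≠ 0 := mul_ne_zero (log_ne_zero_of_pos_of_ne_one hb₀ hb₁) hc
  refine ⟨convex_univ, fun x _ y _ hxy p q hp hq hpq => ?_⟩
  have hne : log b * c * x ≠ log b * c * y := fun h => hxy (mul_left_cancel₀ hk h)
  have := strictConvexOn_exp.2 (mem_univ _) (mem_univ _) hne hp hq hpq
  simp only [smul_eq_mul, rpow_def_of_pos hb₀] at this ⊢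
  convert this using 2 <;> ring_nf

theorem convexOn_rpow_left_mul {b : ℝ} (hb : 0 < b) (c : ℝ) :
    ConvexOn ℝ univ fun x : ℝ => b ^ (c * x) :=
  (convexOn_rpow_left hb).comp_linearMap (LinearMap.mul ℝ ℝ c)

theorem integral_lt_integral_of_ae_lt {α : Type*} [MeasurableSpace α] {μ : Measure α} [NeZero μ]
    {f g : α → ℝ} (hf : Integrable f μ) (hg : Integrable g μ) (hfg : ∀ᵐ a ∂μ, f a < g a) :
    ∫ a, f a ∂μ < ∫ a, g a ∂μ := by
  refine (integral_mono_ae hf hg (hfg.mono fun _ => le_of_lt)).lt_of_ne fun h => ?_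
  have hae := (integral_eq_iff_of_ae_le hf hg (hfg.mono fun _ => le_of_lt)).1 h
  have : ∀ᵐ _ ∂μ, False := (hae.and hfg).mono fun _ h => h.2.ne h.1
  exact NeZero.ne μ (ae_eq_bot.1 (eventually_false_iff_eq_bot.1 this))

theorem strictConvexOn_integral {α E : Type*} [MeasurableSpace α] {μ : Measure α} [NeZero μ]
    [AddCommGroup E] [Module ℝ E] {s : Set E} {F : E → α → ℝ} (hs : Convex ℝ s)
    (hF : ∀ x ∈ s, Integrable (F x) μ) (hconv : ∀ᵐ a ∂μ, StrictConvexOn ℝ s (F · a)) :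
    StrictConvexOn ℝ s fun x => ∫ a, F x a ∂μ := by
  refine ⟨hs, fun x hx y hy hxy p q hp hq hpq => ?_⟩
  rw [smul_eq_mul, smul_eq_mul, ← integral_const_mul, ← integral_const_mul,
    ← integral_add ((hF x hx).const_mul p) ((hF y hy).const_mul q)]
  refine integral_lt_integral_of_ae_lt (hF _ (hs hx hy hp.le hq.le hpq))
    (((hF x hx).const_mul p).add ((hF y hy).const_mul q)) ?_
  filter_upwards [hconv] with a ha using ha.2 hx hy hxy hp hq hpq

theorem ConvexOn.le_of_tendsto_nhdsGT_of_tendsto_nhdsLT {f : ℝ → ℝ} {a b L : ℝ}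
    (hf : ConvexOn ℝ (Ioo a b) f) (ha : Tendsto f (𝓝[>] a) (𝓝 L))
    (hb : Tendsto f (𝓝[<] b) (𝓝 L)) {x : ℝ} (hx : x ∈ Ioo a b) : f x ≤ L := by
  have hmax : Tendsto (fun p : ℝ × ℝ => max (f p.1) (f p.2)) (𝓝[>] a ×ˢ 𝓝[<] b) (𝓝 L) := by
    simpa using (ha.comp tendsto_fst).max (hb.comp tendsto_snd)
  refine ge_of_tendsto hmax ?_
  filter_upwards [prod_mem_prod (Ioo_mem_nhdsGT hx.1) (Ioo_mem_nhdsLT hx.2)] with ⟨y, z⟩ ⟨hy, hz⟩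
  refine hf.le_on_segment ⟨hy.1, hy.2.trans hx.2⟩ ⟨hx.1.trans hz.1, hz.2⟩ ?_
  rw [segment_eq_Icc (hy.2.trans hz.1).le]
  exact ⟨hy.2.le, hz.1.le⟩

theorem StrictConvexOn.lt_of_tendsto_nhdsGT_of_tendsto_nhdsLT {f : ℝ → ℝ} {a b L : ℝ}
    (hf : StrictConvexOn ℝ (Ioo a b) f) (ha : Tendsto f (𝓝[>] a) (𝓝 L))
    (hb : Tendsto f (𝓝[<] b) (𝓝 L)) {x : ℝ} (hx : x ∈ Ioo a b) : f x < L := by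
  obtain ⟨y, hay, hyx⟩ := exists_between hx.1
  obtain ⟨z, hxz, hzb⟩ := exists_between hx.2
  have hy : y ∈ Ioo a b := ⟨hay, hyx.trans hx.2⟩
  have hz : z ∈ Ioo a b := ⟨hx.1.trans hxz, hzb⟩
  calc f x < max (f y) (f z) :=
        hf.lt_on_openSegment hy hz (hyx.trans hxz).ne
          (by rw [openSegment_eq_Ioo (hyx.trans hxz)]; exact ⟨hyx, hxz⟩)
    _ ≤ L := max_le (hf.convexOn.le_of_tendsto_nhdsGT_of_tendsto_nhdsLT ha hb hy)
        (hf.convexOn.le_of_tendsto_nhdsGT_of_tendsto_nhdsLT ha hb hz)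

theorem integrable_pow_mul_exp_neg_sq_div_two (n : ℕ) :
    Integrable fun t : ℝ => t ^ n * exp (-t ^ 2 / 2) := by
  convert integrable_rpow_mul_exp_neg_mul_sq one_half_pos
    (by linarith [n.cast_nonneg (α := ℝ)] : (-1 : ℝ) < n) using 2 with t
  rw [rpow_natCast]; ring_nf

theorem tendsto_pow_mul_exp_neg_sq_div_two_atTop (n : ℕ) :
    Tendsto (fun t : ℝ => t ^ n * exp (-t ^ 2 / 2)) atTop (𝓝 0) := by
  refine ((tendsto_rpow_abs_mul_exp_neg_mul_sq_cocompact one_half_pos n).mono_left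
    atTop_le_cocompact).congr' ?_
  filter_upwards [eventually_ge_atTop 0] with t ht
  rw [abs_of_nonneg ht, rpow_natCast]; ring_nf

theorem hasDerivAt_exp_neg_sq_div_two (t : ℝ) :
    HasDerivAt (fun t : ℝ => exp (-t ^ 2 / 2)) (-t * exp (-t ^ 2 / 2)) t := by
  convert ((hasDerivAt_pow 2 t).fun_neg.div_const 2).exp using 1
  push_cast; ring

theorem integral_Ioi_one_mul_exp_neg_sq_div_two :
    ∫ t in Ioi (1 : ℝ), t * exp (-t ^ 2 / 2) = exp (-(1 / 2)) := by
  have hderiv (t : ℝ) (_ : t ∈ Ici (1 : ℝ)) :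
      HasDerivAt (fun t : ℝ => -exp (-t ^ 2 / 2)) (t * exp (-t ^ 2 / 2)) t := by
    simpa using (hasDerivAt_exp_neg_sq_div_two t).fun_neg
  have hint : IntegrableOn (fun t : ℝ => t * exp (-t ^ 2 / 2)) (Ioi 1) := by
    simpa using (integrable_pow_mul_exp_neg_sq_div_two 1).integrableOn
  have hlim : Tendsto (fun t : ℝ => -exp (-t ^ 2 / 2)) atTop (𝓝 0) := by
    simpa using (tendsto_pow_mul_exp_neg_sq_div_two_atTop 0).neg
  rw [integral_Ioi_of_hasDerivAt_of_tendsto' hderiv hint hlim]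
  norm_num

theorem integral_Ioi_one_sq_sub_one_mul_exp_neg_sq_div_two :
    ∫ t in Ioi (1 : ℝ), (t ^ 2 - 1) * exp (-t ^ 2 / 2) = exp (-(1 / 2)) := by
  have hderiv (t : ℝ) (_ : t ∈ Ici (1 : ℝ)) :
      HasDerivAt (fun t : ℝ => -(t * exp (-t ^ 2 / 2))) ((t ^ 2 - 1) * exp (-t ^ 2 / 2)) t :=
    ((hasDerivAt_id' t).fun_mul (hasDerivAt_exp_neg_sq_div_two t)).fun_neg.congr_deriv
      (by ring)
  have hint : IntegrableOn (fun t : ℝ => (t ^ 2 - 1) * exp (-t ^ 2 / 2)) (Ioi 1) := by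
    convert ((integrable_pow_mul_exp_neg_sq_div_two 2).sub
      (integrable_pow_mul_exp_neg_sq_div_two 0)).integrableOn using 1
    ext t; simp [sub_mul]
  have hlim : Tendsto (fun t : ℝ => -(t * exp (-t ^ 2 / 2))) atTop (𝓝 0) := by
    simpa using (tendsto_pow_mul_exp_neg_sq_div_two_atTop 1).neg
  rw [integral_Ioi_of_hasDerivAt_of_tendsto' hderiv hint hlim]
  norm_num

theorem rpow_le_one_add_inv {x s : ℝ} (hx : 0 < x) (hs : s ∈ Icc (-1) 0) : x ^ s ≤ 1 + x⁻¹ := by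
  rcases le_total 1 x with h | h
  · linarith [rpow_le_one_of_one_le_of_nonpos h hs.2, inv_pos.2 hx]
  · calc x ^ s ≤ x ^ (-1 : ℝ) := rpow_le_rpow_of_exponent_ge hx h hs.1
      _ ≤ 1 + x⁻¹ := by rw [rpow_neg_one]; linarith

noncomputable def integrand (l t : ℝ) : ℝ :=
  ((t + 1) ^ (-(2 * l)) + (t - 1) ^ (-(2 * l))) * (t ^ 2 - 1) * exp (-t ^ 2 / 2)

theorem measurable_integrand (l : ℝ) : Measurable (integrand l) := by
  unfold integrand; fun_prop

theorem continuous_integrand_left {t : ℝ} (ht : 1 < t) : Continuous fun l => integrand l t := by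
  unfold integrand
  have h₁ : t + 1 ≠ 0 := by linarith
  have h₂ : t - 1 ≠ 0 := by linarith
  fun_prop (disch := assumption)

theorem norm_integrand_le {l t : ℝ} (hl : l ∈ Icc 0 (1 / 2)) (ht : 1 < t) :
    ‖integrand l t‖ ≤ 3 * (t ^ 2 * exp (-t ^ 2 / 2)) := by
  have hs : -(2 * l) ∈ Icc (-1) 0 := ⟨by linarith [hl.2], by linarith [hl.1]⟩
  have h₁ : (t + 1) ^ (-(2 * l)) ≤ 1 := rpow_le_one_of_one_le_of_nonpos (by linarith) hs.2
  have h₂ := rpow_le_one_add_inv (by linarith : 0 < t - 1) hs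
  have hsq : 0 < t ^ 2 - 1 := by nlinarith
  have key : ((t + 1) ^ (-(2 * l)) + (t - 1) ^ (-(2 * l))) * (t ^ 2 - 1) ≤ 3 * t ^ 2 :=
    calc _ ≤ (1 + (1 + (t - 1)⁻¹)) * (t ^ 2 - 1) := by gcongr
      _ = 2 * t ^ 2 + t - 1 := by field_simp [(by linarith : t - 1 ≠ 0)]; ring
      _ ≤ 3 * t ^ 2 := by nlinarith
  have hnonneg : 0 ≤ integrand l t := by
    unfold integrand
    have := rpow_nonneg (by linarith : (0:ℝ) ≤ t + 1) (-(2 * l))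
    have := rpow_nonneg (by linarith : (0:ℝ) ≤ t - 1) (-(2 * l))
    positivity
  rw [norm_of_nonneg hnonneg, ← mul_assoc]
  exact mul_le_mul_of_nonneg_right key (exp_pos _).le

theorem ae_norm_integrand_le {l : ℝ} (hl : l ∈ Icc 0 (1 / 2)) :
    ∀ᵐ t ∂volume.restrict (Ioi 1), ‖integrand l t‖ ≤ 3 * (t ^ 2 * exp (-t ^ 2 / 2)) :=
  ae_restrict_of_forall_mem measurableSet_Ioi fun _ ht => norm_integrand_le hl ht

theorem integrableOn_integrand {l : ℝ} (hl : l ∈ Icc 0 (1 / 2)) :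
    IntegrableOn (integrand l) (Ioi 1) :=
  ((integrable_pow_mul_exp_neg_sq_div_two 2).const_mul 3).integrableOn.mono'
    (measurable_integrand l).aestronglyMeasurable (ae_norm_integrand_le hl)

theorem continuousOn_integral_integrand :
    ContinuousOn (fun l => ∫ t in Ioi 1, integrand l t) (Icc 0 (1 / 2)) :=
  continuousOn_of_dominated (fun l _ => (measurable_integrand l).aestronglyMeasurable)
    (fun _ hl => ae_norm_integrand_le hl)
    ((integrable_pow_mul_exp_neg_sq_div_two 2).const_mul 3).integrableOn
    (ae_restrict_of_forall_mem measurableSet_Ioi fun _ ht =>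
      (continuous_integrand_left ht).continuousOn)

theorem strictConvexOn_integrand_left {t : ℝ} (ht : 1 < t) :
    StrictConvexOn ℝ univ fun l => integrand l t := by
  have h₁ : StrictConvexOn ℝ univ fun l : ℝ => (t + 1) ^ (-(2 * l)) := by
    simpa only [neg_mul] using strictConvexOn_rpow_left_mul (by linarith : 0 < t + 1)
      (by linarith) (by norm_num : (-2 : ℝ) ≠ 0)
  have h₂ : ConvexOn ℝ univ fun l : ℝ => (t - 1) ^ (-(2 * l)) := by
    simpa only [neg_mul] using convexOn_rpow_left_mul (by linarith : 0 < t - 1) (-2)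
  exact ((h₁.add_convexOn h₂).mul_const (by nlinarith : 0 < t ^ 2 - 1)).mul_const (exp_pos _)

theorem strictConvexOn_integral_integrand :
    StrictConvexOn ℝ (Icc 0 (1 / 2)) fun l => ∫ t in Ioi 1, integrand l t := by
  have : NeZero (volume (Ioi (1 : ℝ))) := ⟨by simp⟩
  exact strictConvexOn_integral (convex_Icc _ _) (fun _ hl => integrableOn_integrand hl)
    (ae_restrict_of_forall_mem measurableSet_Ioi fun _ ht =>
      (strictConvexOn_integrand_left ht).subset (subset_univ _) (convex_Icc _ _))

theorem integral_integrand_zero : ∫ t in Ioi 1, integrand 0 t = 2 * exp (-(1 / 2)) := by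
  have h (t : ℝ) : integrand 0 t = 2 * ((t ^ 2 - 1) * exp (-t ^ 2 / 2)) := by
    simp only [integrand, mul_zero, neg_zero, rpow_zero]; ring
  simp only [h, integral_const_mul, integral_Ioi_one_sq_sub_one_mul_exp_neg_sq_div_two]

theorem integral_integrand_one_half :
    ∫ t in Ioi 1, integrand (1 / 2) t = 2 * exp (-(1 / 2)) := by
  have h : EqOn (integrand (1 / 2)) (fun t => 2 * (t * exp (-t ^ 2 / 2))) (Ioi 1) := by
    intro t (ht : 1 < t)
    have h₁ : t + 1 ≠ 0 := by linarith
    have h₂ : t - 1 ≠ 0 := by linarith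
    simp only [integrand, show -(2 * (1 / 2 : ℝ)) = -1 by norm_num, rpow_neg_one]
    field_simp
    ring
  rw [setIntegral_congr_fun measurableSet_Ioi h, integral_const_mul,
    integral_Ioi_one_mul_exp_neg_sq_div_two]

theorem stmt_10
    (g : ℝ → ℝ)
    (hg : ∀ l : ℝ, g l =
      ∫ t in Ioi (1:ℝ), ((t+1) ^ (-(2*l)) + (t-1) ^ (-(2*l))) * (t^2 - 1) * Real.exp (-t^2/2)) :
    StrictConvexOn ℝ (Ioo 0 (1/2)) g ∧
    Tendsto g (nhdsWithin 0 (Ioi 0)) (nhds (2 * Real.exp (-(1/2)))) ∧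
    Tendsto g (nhdsWithin (1/2) (Iio (1/2))) (nhds (2 * Real.exp (-(1/2)))) ∧
    ∀ l ∈ Ioo (0:ℝ) (1/2), g l < 2 * Real.exp (-(1/2)) := by
  obtain rfl : g = fun l => ∫ t in Ioi 1, integrand l t := funext hg
  have hconv := strictConvexOn_integral_integrand.subset Ioo_subset_Icc_self (convex_Ioo _ _)
  have hlim₀ : Tendsto (fun l => ∫ t in Ioi 1, integrand l t) (𝓝[>] 0)
      (𝓝 (2 * exp (-(1 / 2)))) := by
    rw [← integral_integrand_zero]
    exact (continuousOn_integral_integrand 0 (by norm_num)).mono_of_mem_nhdsWithin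
      (Icc_mem_nhdsGT (by norm_num))
  have hlim₁ : Tendsto (fun l => ∫ t in Ioi 1, integrand l t) (𝓝[<] (1 / 2))
      (𝓝 (2 * exp (-(1 / 2)))) := by
    rw [← integral_integrand_one_half]
    exact (continuousOn_integral_integrand (1 / 2) (by norm_num)).mono_of_mem_nhdsWithin
      (Icc_mem_nhdsLT (by norm_num))
  exact ⟨hconv, hlim₀, hlim₁, fun l hl =>
    hconv.lt_of_tendsto_nhdsGT_of_tendsto_nhdsLT hlim₀ hlim₁ hl⟩
end

section
/- Let λ ∈ (0, 1/2) and φ_λ(x) = ∫₀^∞ y^{-2λ} exp(−(y−x)²/2) dy, with φ_λ''(x) = ∫₀^∞ y^{-2λ}((y−x)² − 1) exp(−(y−x)²/2) dy. If x* ∈ (0,1) is a point where φ_λ''' (x*) = 0, then φ_λ''(x*) < 0. -/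
/-!
Let `Hₙ` be the probabilists' Hermite polynomials, `g(t) = e^{-t²/2}` and `w(y) = y ^ (-2λ)` on
`(0, ∞)`. Since `Hₙ(y - x) g(y - x)` is the `n`-th `x`-derivative of `g(y - x)`, differentiation
under the integral sign gives `φ⁽ⁿ⁾(x) = ∫ w(y) Hₙ(y - x) g(y - x) dy`. The integrand of
`φ'' + x φ' + 2λ φ` is `-d/dy (y ^ (1 - 2λ) g(y - x))`, which vanishes at `0` and `∞`, so
`φ'' + x φ' + 2λ φ = 0`. Differentiating once more and eliminating `φ'` at a zero of `φ'''` leaves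
`(x² - 1 - 2λ) φ''(x) = 2λ (1 + 2λ) φ(x)`, whose right-hand side is positive while
`x² - 1 - 2λ < 0` for `x ∈ (0, 1)`.
-/

open Real MeasureTheory Set Filter Topology Polynomial

theorem Polynomial.tendsto_aeval_mul_exp_neg_mul_sq_cocompact {R : Type*} [CommSemiring R]
    [Algebra R ℝ] (q : R[X]) {b : ℝ} (hb : 0 < b) :
    Tendsto (fun t : ℝ => aeval t q * exp (-b * t ^ 2)) (cocompact ℝ) (𝓝 0) := by
  have hmonomial (i : ℕ) :
      Tendsto (fun t : ℝ => t ^ i * exp (-b * t ^ 2)) (cocompact ℝ) (𝓝 0) :=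
    squeeze_zero_norm (fun t => by simp [Real.rpow_natCast])
      (tendsto_rpow_abs_mul_exp_neg_mul_sq_cocompact hb i)
  have hsum := tendsto_finsetSum (Finset.range (q.natDegree + 1))
    fun i _ => (hmonomial i).const_smul (q.coeff i)
  simp only [smul_zero, Finset.sum_const_zero] at hsum
  refine hsum.congr fun t => ?_
  simp only [aeval_eq_sum_range, Finset.sum_mul, smul_mul_assoc]

theorem Polynomial.exists_abs_aeval_mul_exp_neg_mul_sq_le {R : Type*} [CommSemiring R]
    [Algebra R ℝ] (q : R[X]) {b : ℝ} (hb : 0 < b) :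
    ∃ C, ∀ t : ℝ, |aeval t q| * exp (-b * t ^ 2) ≤ C := by
  have hcont : Continuous fun t : ℝ => aeval t q * exp (-b * t ^ 2) := by fun_prop
  obtain ⟨C, hC⟩ := isBounded_iff_forall_norm_le.1 <| hcont.isBounded_range_iff_isBigO.2 <|
    (q.tendsto_aeval_mul_exp_neg_mul_sq_cocompact hb).isBigO_one ℝ
  exact ⟨C, fun t => by simpa [abs_mul] using hC _ (mem_range_self t)⟩

/-- `(-1) ^ n` times the `n`-th derivative of the Gaussian `exp (-t ^ 2 / 2)`
(`deriv_gaussian_eq_hermite_mul_gaussian`). -/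
noncomputable def hermiteGaussian (n : ℕ) (t : ℝ) : ℝ :=
  aeval t (hermite n) * exp (-(t ^ 2 / 2))

theorem hasDerivAt_hermiteGaussian (n : ℕ) (t : ℝ) :
    HasDerivAt (hermiteGaussian n) (-hermiteGaussian (n + 1) t) t := by
  have hexponent : HasDerivAt (fun t : ℝ => -(t ^ 2 / 2)) (-t) t := by
    simpa using ((hasDerivAt_pow 2 t).div_const 2).fun_neg
  refine (((hermite n).hasDerivAt_aeval t).fun_mul hexponent.exp).congr_deriv ?_
  simp only [hermiteGaussian, hermite_succ, map_sub, map_mul, aeval_X]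
  ring

theorem hasDerivAt_hermiteGaussian_sub (n : ℕ) (y x : ℝ) :
    HasDerivAt (fun x => hermiteGaussian n (y - x)) (hermiteGaussian (n + 1) (y - x)) x := by
  simpa using (hasDerivAt_hermiteGaussian n (y - x)).comp_const_sub y x

theorem continuous_hermiteGaussian (n : ℕ) : Continuous (hermiteGaussian n) :=
  continuous_iff_continuousAt.2 fun t => (hasDerivAt_hermiteGaussian n t).continuousAt

theorem hermiteGaussian_zero (t : ℝ) : hermiteGaussian 0 t = exp (-(1 / 2) * t ^ 2) := by
  rw [hermiteGaussian, hermite_zero, aeval_C, map_one, one_mul]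
  ring_nf

theorem hermiteGaussian_one (t : ℝ) : hermiteGaussian 1 t = t * hermiteGaussian 0 t := by
  simp [hermiteGaussian]

theorem hermiteGaussian_two (t : ℝ) :
    hermiteGaussian 2 t = (t ^ 2 - 1) * hermiteGaussian 0 t := by
  rw [hermiteGaussian, hermiteGaussian, hermite_succ, hermite_one, hermite_zero]
  simp only [map_sub, map_mul, aeval_X, derivative_X, map_one]
  ring

theorem exists_abs_hermiteGaussian_sub_le (n : ℕ) :
    ∃ C, ∀ x y z : ℝ, |z - x| ≤ 1 →
      |hermiteGaussian n (y - z)| ≤ C * exp (-(1 / 8) * (y - x) ^ 2) := by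
  obtain ⟨C, hC⟩ :=
    (hermite n).exists_abs_aeval_mul_exp_neg_mul_sq_le (b := 1 / 4) (by norm_num)
  have hC0 : 0 ≤ C := (mul_nonneg (abs_nonneg _) (exp_pos _).le).trans (hC 0)
  refine ⟨C * exp (1 / 4), fun x y z hz => ?_⟩
  have hsplit : exp (-((y - z) ^ 2 / 2)) =
      exp (-(1 / 4) * (y - z) ^ 2) * exp (-(1 / 4) * (y - z) ^ 2) := by
    rw [← exp_add]; ring_nf
  -- `(y - x)² ≤ 2 (y - z)² + 2 (z - x)²`
  have hshift : exp (-(1 / 4) * (y - z) ^ 2) ≤ exp (1 / 4) * exp (-(1 / 8) * (y - x) ^ 2) := by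
    rw [← exp_add, exp_le_exp]
    nlinarith [sq_nonneg (y - 2 * z + x), abs_le.1 hz, sq_abs (z - x)]
  calc |hermiteGaussian n (y - z)|
      = |aeval (y - z) (hermite n)| * exp (-(1 / 4) * (y - z) ^ 2)
          * exp (-(1 / 4) * (y - z) ^ 2) := by
        rw [hermiteGaussian, abs_mul, abs_exp, hsplit, mul_assoc]
    _ ≤ C * (exp (1 / 4) * exp (-(1 / 8) * (y - x) ^ 2)) :=
        mul_le_mul (hC _) hshift (exp_pos _).le hC0
    _ = C * exp (1 / 4) * exp (-(1 / 8) * (y - x) ^ 2) := by ring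

noncomputable def hermiteGaussianIntegral (μ : Measure ℝ) (w : ℝ → ℝ) (n : ℕ) (x : ℝ) :
    ℝ :=
  ∫ y, w y * hermiteGaussian n (y - x) ∂μ

section HermiteGaussianIntegral

variable {μ : Measure ℝ} {w : ℝ → ℝ}

theorem integrable_mul_hermiteGaussian_sub (hw_meas : AEStronglyMeasurable w μ)
    (hw : ∀ x, Integrable (fun y => w y * exp (-(1 / 8) * (y - x) ^ 2)) μ) (n : ℕ) (x : ℝ) :
    Integrable (fun y => w y * hermiteGaussian n (y - x)) μ := by
  obtain ⟨C, hC⟩ := exists_abs_hermiteGaussian_sub_le n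
  refine ((hw x).norm.const_mul C).mono'
    (hw_meas.mul ((continuous_hermiteGaussian n).comp (by fun_prop)).aestronglyMeasurable)
    (ae_of_all _ fun y => ?_)
  simpa [abs_mul, mul_left_comm C] using
    mul_le_mul_of_nonneg_left (hC x y x (by simp)) (abs_nonneg (w y))

theorem hasDerivAt_hermiteGaussianIntegral (hw_meas : AEStronglyMeasurable w μ)
    (hw : ∀ x, Integrable (fun y => w y * exp (-(1 / 8) * (y - x) ^ 2)) μ) (n : ℕ) (x : ℝ) :
    HasDerivAt (hermiteGaussianIntegral μ w n) (hermiteGaussianIntegral μ w (n + 1) x) x := by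
  obtain ⟨C, hC⟩ := exists_abs_hermiteGaussian_sub_le (n + 1)
  have hint := integrable_mul_hermiteGaussian_sub hw_meas hw
  refine (hasDerivAt_integral_of_dominated_loc_of_deriv_le (Metric.ball_mem_nhds x one_pos)
    (Eventually.of_forall fun z => (hint n z).1) (hint n x) (hint (n + 1) x).1
    (bound := fun y => C * ‖w y * exp (-(1 / 8) * (y - x) ^ 2)‖) (ae_of_all _ fun y z hz => ?_)
    ((hw x).norm.const_mul C)
    (ae_of_all _ fun y z _ => (hasDerivAt_hermiteGaussian_sub n y z).const_mul (w y))).2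
  simpa [abs_mul, mul_left_comm C] using mul_le_mul_of_nonneg_left
    (hC x y z (by simpa [Real.dist_eq] using (Metric.mem_ball.1 hz).le)) (abs_nonneg (w y))

end HermiteGaussianIntegral

theorem exp_neg_mul_sq_sub_le {b : ℝ} (hb : 0 ≤ b) (x y : ℝ) :
    exp (-b * (y - x) ^ 2) ≤ exp (b * x ^ 2) * exp (-(b / 2) * y ^ 2) := by
  rw [← exp_add, exp_le_exp]
  nlinarith [mul_nonneg hb (sq_nonneg (y - 2 * x))]

theorem integrableOn_rpow_mul_exp_neg_mul_sq_sub {b s : ℝ} (hb : 0 < b) (hs : -1 < s) (x : ℝ) :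
    IntegrableOn (fun y => y ^ s * exp (-b * (y - x) ^ 2)) (Ioi 0) := by
  refine (((integrable_rpow_mul_exp_neg_mul_sq (half_pos hb) hs).const_mul
    (exp (b * x ^ 2))).integrableOn).mono' (by fun_prop) ?_
  filter_upwards [ae_restrict_mem measurableSet_Ioi] with y (hy : 0 < y)
  have hys := rpow_pos_of_pos hy s
  rw [norm_mul, norm_of_nonneg hys.le, norm_of_nonneg (exp_pos _).le, mul_left_comm]
  exact mul_le_mul_of_nonneg_left (exp_neg_mul_sq_sub_le hb.le x y) hys.le

theorem integrableOn_rpow_mul_hermiteGaussian_sub {s : ℝ} (hs : -1 < s) (n : ℕ) (x : ℝ) :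
    IntegrableOn (fun y => y ^ s * hermiteGaussian n (y - x)) (Ioi 0) :=
  integrable_mul_hermiteGaussian_sub (by fun_prop)
    (integrableOn_rpow_mul_exp_neg_mul_sq_sub (by norm_num) hs) n x

theorem hasDerivAt_hermiteGaussianIntegral_rpow {s : ℝ} (hs : -1 < s) (n : ℕ) (x : ℝ) :
    HasDerivAt (hermiteGaussianIntegral (volume.restrict (Ioi 0)) (fun y => y ^ s) n)
      (hermiteGaussianIntegral (volume.restrict (Ioi 0)) (fun y => y ^ s) (n + 1) x) x :=
  hasDerivAt_hermiteGaussianIntegral (by fun_prop)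
    (integrableOn_rpow_mul_exp_neg_mul_sq_sub (by norm_num) hs) n x

theorem tendsto_rpow_mul_hermiteGaussian_zero_sub_atTop (s x : ℝ) :
    Tendsto (fun y => y ^ s * hermiteGaussian 0 (y - x)) atTop (𝓝 0) := by
  have hdecay : Tendsto (fun y => exp (1 / 2 * x ^ 2) * (|y| ^ s * exp (-(1 / 4) * y ^ 2)))
      atTop (𝓝 0) := by
    simpa using ((tendsto_rpow_abs_mul_exp_neg_mul_sq_cocompact (a := 1 / 4) (by norm_num)
      s).mono_left atTop_le_cocompact).const_mul (exp (1 / 2 * x ^ 2))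
  refine squeeze_zero_norm' ?_ hdecay
  filter_upwards [eventually_gt_atTop 0] with y hy
  have hys := rpow_pos_of_pos hy s
  rw [norm_mul, norm_of_nonneg hys.le, abs_of_pos hy, hermiteGaussian_zero,
    norm_of_nonneg (exp_pos _).le, mul_left_comm]
  refine mul_le_mul_of_nonneg_left
    ((exp_neg_mul_sq_sub_le (b := 1 / 2) (by norm_num) x y).trans_eq ?_) hys.le
  norm_num

theorem hermiteGaussianIntegral_rpow_ode {s : ℝ} (hs : -1 < s) (x : ℝ) :
    hermiteGaussianIntegral (volume.restrict (Ioi 0)) (fun y => y ^ s) 2 x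
      + x * hermiteGaussianIntegral (volume.restrict (Ioi 0)) (fun y => y ^ s) 1 x
      = s * hermiteGaussianIntegral (volume.restrict (Ioi 0)) (fun y => y ^ s) 0 x := by
  have hint := integrableOn_rpow_mul_hermiteGaussian_sub hs
  have hs1 : 0 < s + 1 := by linarith
  set G : ℝ → ℝ := fun y => y ^ (s + 1) * hermiteGaussian 0 (y - x)
  have hderiv : ∀ y ∈ Ioi (0 : ℝ), HasDerivAt G
      (-(y ^ s * hermiteGaussian 2 (y - x) + x * (y ^ s * hermiteGaussian 1 (y - x))
        - s * (y ^ s * hermiteGaussian 0 (y - x)))) y := by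
    intro y (hy : 0 < y)
    refine ((hasDerivAt_rpow_const (Or.inl hy.ne')).mul
      ((hasDerivAt_hermiteGaussian 0 (y - x)).comp_sub_const y x)).congr_deriv ?_
    rw [hermiteGaussian_two, hermiteGaussian_one, add_sub_cancel_right, rpow_add_one hy.ne']
    ring
  have hG0 : G 0 = 0 := by simp [G, zero_rpow hs1.ne']
  have hcont : ContinuousWithinAt G (Ici 0) 0 :=
    ((continuousAt_rpow_const 0 _ (Or.inr hs1.le)).mul
      ((continuous_hermiteGaussian 0).comp (by fun_prop)).continuousAt).continuousWithinAt
  have hFTC := integral_Ioi_of_hasDerivAt_of_tendsto hcont hderiv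
    ((((hint 2 x).add ((hint 1 x).const_mul x)).sub ((hint 0 x).const_mul s)).neg)
    (tendsto_rpow_mul_hermiteGaussian_zero_sub_atTop (s + 1) x)
  rw [hG0, sub_zero, integral_neg, neg_eq_zero,
    integral_sub (f := fun y => y ^ s * hermiteGaussian 2 (y - x)
      + x * (y ^ s * hermiteGaussian 1 (y - x)))
      ((hint 2 x).add ((hint 1 x).const_mul x)) ((hint 0 x).const_mul s),
    integral_add (hint 2 x) ((hint 1 x).const_mul x), integral_const_mul,
    integral_const_mul] at hFTC
  simp only [hermiteGaussianIntegral]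
  linarith

theorem hermiteGaussianIntegral_rpow_zero_pos {s : ℝ} (hs : -1 < s) (x : ℝ) :
    0 < hermiteGaussianIntegral (volume.restrict (Ioi 0)) (fun y => y ^ s) 0 x := by
  have hpos : ∀ y ∈ Ioi (0 : ℝ), 0 < y ^ s * hermiteGaussian 0 (y - x) := fun y hy =>
    mul_pos (rpow_pos_of_pos hy s) (by rw [hermiteGaussian_zero]; positivity)
  have hsupport :
      Function.support (fun y => y ^ s * hermiteGaussian 0 (y - x)) ∩ Ioi 0 = Ioi 0 :=
    inter_eq_right.2 fun y hy => (hpos y hy).ne'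
  rw [hermiteGaussianIntegral, setIntegral_pos_iff_support_of_nonneg_ae
    ((ae_restrict_mem measurableSet_Ioi).mono fun y hy => (hpos y hy).le)
    (integrableOn_rpow_mul_hermiteGaussian_sub hs 0 x), hsupport, Real.volume_Ioi]
  exact ENNReal.zero_lt_top

theorem deriv_deriv_neg_of_ode {f : ℝ → ℝ} {s x : ℝ} (hf : Differentiable ℝ f)
    (hf' : Differentiable ℝ (deriv f))
    (hode : ∀ x, deriv (deriv f) x + x * deriv f x = s * f x)
    (hs : s < 0) (hx : x ^ 2 < 1 - s) (hfx : 0 < f x) (h3 : deriv (deriv (deriv f)) x = 0) :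
    deriv (deriv f) x < 0 := by
  have hode3 : HasDerivAt (deriv (deriv f))
      (s * deriv f x - (1 * deriv f x + x * deriv (deriv f) x)) x :=
    (((hf x).hasDerivAt.const_mul s).sub ((hasDerivAt_id' x).mul (hf' x).hasDerivAt))
      |>.congr_of_eventuallyEq (Eventually.of_forall fun y => eq_sub_of_add_eq (hode y))
  have hsecond : (x ^ 2 + s - 1) * deriv (deriv f) x = s * (s - 1) * f x := by
    linear_combination (s - 1) * hode x - x * (hode3.deriv.symm.trans h3)
  exact neg_of_mul_pos_right (hsecond ▸ mul_pos (mul_pos_of_neg_of_neg hs (by linarith)) hfx)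
    (by linarith)

theorem stmt_18 (l : ℝ) (hl : 0 < l) (hl2 : l < 1/2)
    (φ : ℝ → ℝ)
    (hφ : ∀ x : ℝ, φ x = ∫ y in Ioi (0:ℝ), y ^ (-(2*l)) * Real.exp (-(y - x)^2 / 2))
    (x₀ : ℝ) (hx₀ : x₀ ∈ Ioo (0:ℝ) 1)
    (h3 : deriv (deriv (deriv φ)) x₀ = 0) :
    deriv (deriv φ) x₀ < 0 := by
  set F := hermiteGaussianIntegral (volume.restrict (Ioi 0)) (fun y : ℝ => y ^ (-(2 * l)))
  have hs : -1 < -(2 * l) := by linarith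
  have hφF : φ = F 0 := funext fun x => by
    simp only [hφ, F, hermiteGaussianIntegral, hermiteGaussian_zero]
    congr with y
    ring_nf
  have hF := hasDerivAt_hermiteGaussianIntegral_rpow hs
  have deriv_F (n : ℕ) : deriv (F n) = F (n + 1) := funext fun x => (hF n x).deriv
  subst hφF
  refine deriv_deriv_neg_of_ode (s := -(2 * l)) (fun x => (hF 0 x).differentiableAt) ?_
    (fun x => ?_) (by linarith) ?_ (hermiteGaussianIntegral_rpow_zero_pos hs x₀) h3
  · rw [deriv_F]
    exact fun x => (hF 1 x).differentiableAt
  · rw [deriv_F, deriv_F]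
    exact hermiteGaussianIntegral_rpow_ode hs x
  · nlinarith [hx₀.1, hx₀.2]
end

section
/- Fix x ∈ (−1, 0) and for λ ∈ (0, 1/2) define f_x(λ) = ∫₀^∞ y^{-2λ}((y−x)² − 1) exp(−(y−x)²/2) dy. Then lim_{λ→0⁺} f_x(λ) = −x·exp(−x²/2) > 0, and lim_{λ→(1/2)⁻} f_x(λ) = −∞. -/
/-!
Write `g y = ((y - x)^2 - 1) * exp (-(y - x)^2 / 2)`: it is bounded, integrable, and the
derivative of `-(y - x) * exp (-(y - x)^2 / 2)`, so `∫₀^∞ g = -x * exp (-x^2 / 2)`.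
As `λ → 0⁺` the weights `y ^ (-2λ)` are dominated by `1 + y ^ (-1/2)`, and dominated convergence
gives the first limit. As `λ → 1/2⁻`, `g 0 = (x^2 - 1) * exp (-x^2 / 2) < 0` because `|x| < 1`,
so `g ≤ g 0 / 2` on some `(0, ε]`. That piece contributes at most
`(g 0 / 2) * ε ^ (1 - 2λ) / (1 - 2λ) → -∞`, while the integral over `(ε, ∞)` stays below
`(1 + ε⁻¹) * ∫ |g|`.
-/

open Real MeasureTheory Set Filter Topology

lemma rpow_neg_le_one_add_rpow_neg {y a b : ℝ} (hy : 0 < y) (ha : 0 ≤ a) (hab : a ≤ b) :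
    y ^ (-a) ≤ 1 + y ^ (-b) := by
  rcases le_or_gt y 1 with h | h
  · linarith [rpow_le_rpow_of_exponent_ge hy h (neg_le_neg hab)]
  · linarith [rpow_le_one_of_one_le_of_nonpos h.le (neg_nonpos.2 ha), rpow_pos_of_pos hy (-b)]

lemma continuousOn_rpow_const_Ioi (p : ℝ) : ContinuousOn (fun y : ℝ => y ^ p) (Ioi 0) :=
  fun y hy => (continuousAt_rpow_const y p (Or.inl hy.ne')).continuousWithinAt

lemma setIntegral_Ioc_zero_rpow {ε r : ℝ} (hε : 0 ≤ ε) (hr : -1 < r) :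
    ∫ y in Ioc 0 ε, y ^ r = ε ^ (r + 1) / (r + 1) := by
  rw [← intervalIntegral.integral_of_le hε, integral_rpow (Or.inl hr),
    zero_rpow (by linarith), sub_zero]

lemma tendsto_rpow_div_self_nhdsGT_zero {ε : ℝ} (hε : 0 < ε) :
    Tendsto (fun s : ℝ => ε ^ s / s) (𝓝[>] 0) atTop := by
  have hpow : Tendsto (fun s : ℝ => ε ^ s) (𝓝[>] 0) (𝓝 1) := by
    simpa using ((continuousAt_const_rpow (b := 0) hε.ne').tendsto).mono_left nhdsWithin_le_nhds
  simpa [div_eq_mul_inv] using hpow.pos_mul_atTop one_pos tendsto_id.inv_tendsto_nhdsGT_zero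

section WeightedIntegral

variable {g : ℝ → ℝ} {M : ℝ}

lemma integrableOn_rpow_neg_mul (hg : IntegrableOn g (Ioi 0)) (hM : ∀ y, |g y| ≤ M)
    {l : ℝ} (hl0 : 0 ≤ l) (hl : l < 1/2) :
    IntegrableOn (fun y => y ^ (-(2*l)) * g y) (Ioi 0) := by
  rw [← Ioc_union_Ioi_eq_Ioi zero_le_one, integrableOn_union]
  constructor
  · have hrpow : IntegrableOn (fun y : ℝ => y ^ (-(2*l))) (Ioc 0 1) :=
      (intervalIntegral.intervalIntegrable_rpow' (a := 0) (b := 1) (by linarith)).1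
    exact hrpow.mul_bdd (hg.mono_set Ioc_subset_Ioi_self).aestronglyMeasurable
      (ae_of_all _ fun y => hM y)
  · refine (hg.mono_set (Ioi_subset_Ioi zero_le_one)).bdd_mul (c := 1)
      (((continuousOn_rpow_const_Ioi _).mono (Ioi_subset_Ioi zero_le_one)).aestronglyMeasurable
        measurableSet_Ioi) ?_
    filter_upwards [ae_restrict_mem measurableSet_Ioi] with y hy
    rw [norm_of_nonneg (rpow_nonneg (zero_le_one.trans hy.le) _)]
    exact rpow_le_one_of_one_le_of_nonpos hy.le (by linarith)

lemma tendsto_integral_rpow_neg_mul_nhdsGT_zero (hg : IntegrableOn g (Ioi 0))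
    (hM : ∀ y, |g y| ≤ M) :
    Tendsto (fun l : ℝ => ∫ y in Ioi 0, y ^ (-(2*l)) * g y) (𝓝[>] 0)
      (𝓝 (∫ y in Ioi 0, g y)) := by
  refine tendsto_integral_filter_of_dominated_convergence
    (fun y : ℝ => ‖g y‖ + ‖y ^ (-(2 * (1/4 : ℝ))) * g y‖) ?_ ?_ ?_ ?_
  · exact Eventually.of_forall fun l =>
      ((continuousOn_rpow_const_Ioi _).aestronglyMeasurable measurableSet_Ioi).mul
        hg.aestronglyMeasurable
  · filter_upwards [Ioo_mem_nhdsGT (by norm_num : (0:ℝ) < 1/4)] with l hl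
    filter_upwards [ae_restrict_mem measurableSet_Ioi] with y hy
    have hweight : y ^ (-(2*l)) ≤ 1 + y ^ (-(2 * (1/4 : ℝ))) :=
      rpow_neg_le_one_add_rpow_neg hy (by linarith [hl.1]) (by linarith [hl.2])
    rw [norm_mul, norm_mul, norm_of_nonneg (rpow_nonneg hy.le _),
      norm_of_nonneg (rpow_nonneg hy.le _)]
    nlinarith [norm_nonneg (g y)]
  · exact hg.norm.add (integrableOn_rpow_neg_mul hg hM (by norm_num) (by norm_num)).norm
  · filter_upwards [ae_restrict_mem measurableSet_Ioi] with y hy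
    have hcont : ContinuousAt (fun l : ℝ => y ^ (-(2*l))) 0 :=
      (continuousAt_const_rpow hy.ne').comp (by fun_prop)
    simpa using (hcont.tendsto.mono_left nhdsWithin_le_nhds).mul_const (g y)

lemma setIntegral_rpow_neg_mul_le (hg : IntegrableOn g (Ioi 0)) (hM : ∀ y, |g y| ≤ M)
    {ε m : ℝ} (hε : 0 < ε) (hle : ∀ y ∈ Ioc 0 ε, g y ≤ m) {l : ℝ} (hl0 : 0 ≤ l)
    (hl : l < 1/2) :
    ∫ y in Ioi 0, y ^ (-(2*l)) * g y
      ≤ (1 + ε⁻¹) * (∫ y in Ioi ε, |g y|) + m * (ε ^ (-(2*l) + 1) / (-(2*l) + 1)) := by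
  have hint := integrableOn_rpow_neg_mul hg hM hl0 hl
  rw [← Ioc_union_Ioi_eq_Ioi hε.le, setIntegral_union (Ioc_disjoint_Ioi le_rfl)
    measurableSet_Ioi (hint.mono_set Ioc_subset_Ioi_self) (hint.mono_set (Ioi_subset_Ioi hε.le))]
  have hnear :
      ∫ y in Ioc 0 ε, y ^ (-(2*l)) * g y ≤ m * (ε ^ (-(2*l) + 1) / (-(2*l) + 1)) := by
    rw [← setIntegral_Ioc_zero_rpow hε.le (by linarith), ← integral_const_mul]
    refine setIntegral_mono_on (hint.mono_set Ioc_subset_Ioi_self)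
      ((intervalIntegral.intervalIntegrable_rpow' (a := 0) (b := ε) (by linarith)).1.const_mul m)
      measurableSet_Ioc fun y hy => ?_
    rw [mul_comm m]
    exact mul_le_mul_of_nonneg_left (hle y hy) (rpow_nonneg hy.1.le _)
  have hfar : ∫ y in Ioi ε, y ^ (-(2*l)) * g y ≤ (1 + ε⁻¹) * ∫ y in Ioi ε, |g y| := by
    rw [← integral_const_mul]
    refine setIntegral_mono_on (hint.mono_set (Ioi_subset_Ioi hε.le))
      ((hg.mono_set (Ioi_subset_Ioi hε.le)).abs.const_mul _) measurableSet_Ioi fun y hy => ?_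
    have hy0 : 0 < y := hε.trans hy
    have hweight : y ^ (-(2*l)) ≤ 1 + ε⁻¹ := by
      calc y ^ (-(2*l)) ≤ 1 + y ^ (-1 : ℝ) :=
            rpow_neg_le_one_add_rpow_neg hy0 (by linarith) (by linarith)
        _ ≤ 1 + ε⁻¹ := by rw [rpow_neg_one]; gcongr; exact hy.le
    calc y ^ (-(2*l)) * g y ≤ y ^ (-(2*l)) * |g y| :=
          mul_le_mul_of_nonneg_left (le_abs_self _) (rpow_nonneg hy0.le _)
      _ ≤ (1 + ε⁻¹) * |g y| := mul_le_mul_of_nonneg_right hweight (abs_nonneg _)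
  linarith

lemma tendsto_integral_rpow_neg_mul_nhdsLT_half (hg : IntegrableOn g (Ioi 0))
    (hM : ∀ y, |g y| ≤ M) (hg0 : ContinuousAt g 0) (hneg : g 0 < 0) :
    Tendsto (fun l : ℝ => ∫ y in Ioi 0, y ^ (-(2*l)) * g y) (𝓝[<] (1/2)) atBot := by
  obtain ⟨ε, hε, hsub⟩ := mem_nhdsGT_iff_exists_Ioc_subset.1
    (hg0.mono_left nhdsWithin_le_nhds (Iic_mem_nhds (by linarith)) :
      {y | g y ≤ g 0 / 2} ∈ 𝓝[>] 0)
  have hexp : Tendsto (fun l : ℝ => -(2*l) + 1) (𝓝[<] (1/2)) (𝓝[>] 0) := by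
    refine tendsto_nhdsWithin_of_tendsto_nhds_of_eventually_within _ ?_ ?_
    · have hcont : Continuous fun l : ℝ => -(2*l) + 1 := by fun_prop
      exact (hcont.tendsto' _ _ (by norm_num)).mono_left nhdsWithin_le_nhds
    · filter_upwards [self_mem_nhdsWithin] with l (hl : l < 1/2)
      simp only [mem_Ioi]; linarith
  have hnear : Tendsto (fun l : ℝ => g 0 / 2 * (ε ^ (-(2*l) + 1) / (-(2*l) + 1))) (𝓝[<] (1/2))
      atBot :=
    ((tendsto_rpow_div_self_nhdsGT_zero hε).comp hexp).const_mul_atTop_of_neg (by linarith)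
  refine tendsto_atBot_mono' _ ?_
    (tendsto_atBot_add_const_left _ ((1 + ε⁻¹) * ∫ y in Ioi ε, |g y|) hnear)
  filter_upwards [Ioo_mem_nhdsLT (by norm_num : (0:ℝ) < 1/2)] with l hl
  exact setIntegral_rpow_neg_mul_le hg hM hε hsub hl.1.le hl.2

end WeightedIntegral

lemma sq_add_one_le_two_mul_exp (t : ℝ) : t^2 + 1 ≤ 2 * exp (t^2/4) := by
  have h := sum_le_exp_of_nonneg (x := t^2/4) (by positivity) 3
  simp only [Finset.sum_range_succ, Finset.sum_range_zero] at h
  norm_num [Nat.factorial] at h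
  nlinarith [sq_nonneg (t^2/4 - 1)]

lemma abs_sq_sub_one_mul_exp_le (t : ℝ) : |(t^2 - 1) * exp (-t^2/2)| ≤ 2 * exp (-t^2/4) := by
  have habs : |t^2 - 1| ≤ t^2 + 1 := abs_le.2 ⟨by nlinarith [sq_nonneg t], by linarith⟩
  rw [abs_mul, abs_of_pos (exp_pos _)]
  calc |t^2 - 1| * exp (-t^2/2) ≤ 2 * exp (t^2/4) * exp (-t^2/2) := by
        gcongr; exact habs.trans (sq_add_one_le_two_mul_exp t)
    _ = 2 * exp (-t^2/4) := by rw [mul_assoc, ← exp_add]; ring_nf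

lemma abs_sq_sub_one_mul_exp_le_two (t : ℝ) : |(t^2 - 1) * exp (-t^2/2)| ≤ 2 := by
  have : exp (-t^2/4) ≤ 1 := exp_le_one_iff.2 (by nlinarith [sq_nonneg t])
  linarith [abs_sq_sub_one_mul_exp_le t]

lemma integrable_sq_sub_one_mul_exp : Integrable fun t : ℝ => (t^2 - 1) * exp (-t^2/2) := by
  refine ((integrable_exp_neg_mul_sq (b := 1/4) (by norm_num)).const_mul 2).mono'
    (by fun_prop) (ae_of_all _ fun t => ?_)
  rw [Real.norm_eq_abs, show -(1/4 : ℝ) * t^2 = -t^2/4 by ring]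
  exact abs_sq_sub_one_mul_exp_le t

lemma hasDerivAt_neg_mul_exp_neg_sq_div_two (t : ℝ) :
    HasDerivAt (fun t : ℝ => -t * exp (-t^2/2)) ((t^2 - 1) * exp (-t^2/2)) t := by
  have hexp : HasDerivAt (fun t : ℝ => exp (-t^2/2)) (exp (-t^2/2) * (-(2 * t) / 2)) t := by
    simpa using ((hasDerivAt_pow 2 t).neg.div_const 2).exp
  exact ((hasDerivAt_neg' t).mul hexp).congr_deriv (by ring)

lemma integral_Ioi_zero_sq_sub_one_mul_exp (x : ℝ) :
    ∫ y in Ioi 0, ((y - x)^2 - 1) * exp (-(y - x)^2/2) = -x * exp (-x^2/2) := by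
  have hderiv : ∀ y ∈ Ici (0:ℝ), HasDerivAt (fun y => -(y - x) * exp (-(y - x)^2/2))
      (((y - x)^2 - 1) * exp (-(y - x)^2/2)) y :=
    fun y _ => (hasDerivAt_neg_mul_exp_neg_sq_div_two (y - x)).comp_sub_const y x
  have hint : IntegrableOn (fun y => ((y - x)^2 - 1) * exp (-(y - x)^2/2)) (Ioi 0) :=
    (integrable_sq_sub_one_mul_exp.comp_sub_right x).integrableOn
  have hprim : IntegrableOn (fun y => -(y - x) * exp (-(y - x)^2/2)) (Ioi 0) := by
    have := (integrable_mul_exp_neg_mul_sq (b := 1/2) (by norm_num)).neg.comp_sub_right x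
    refine Integrable.integrableOn (this.congr (ae_of_all _ fun y => ?_))
    simp only [Pi.neg_apply]
    ring_nf
  have hlim := tendsto_zero_of_hasDerivAt_of_integrableOn_Ioi
    (fun y hy => hderiv y (mem_Ici_of_Ioi hy)) hint hprim
  rw [integral_Ioi_of_hasDerivAt_of_tendsto' hderiv hint hlim]
  ring_nf

theorem stmt_19 (x : ℝ) (hx : x ∈ Ioo (-1:ℝ) 0)
    (f : ℝ → ℝ)
    (hf : ∀ l : ℝ, f l =
      ∫ y in Ioi (0:ℝ), y ^ (-(2*l)) * ((y - x)^2 - 1) * Real.exp (-(y - x)^2 / 2)) :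
    Tendsto f (nhdsWithin 0 (Ioi 0)) (nhds (-x * Real.exp (-x^2/2))) ∧
    0 < -x * Real.exp (-x^2/2) ∧
    Tendsto f (nhdsWithin (1/2) (Iio (1/2))) atBot := by
  obtain ⟨hx1, hx0⟩ := hx
  let g : ℝ → ℝ := fun y => ((y - x)^2 - 1) * exp (-(y - x)^2 / 2)
  have hfg : f = fun l : ℝ => ∫ y in Ioi 0, y ^ (-(2*l)) * g y :=
    funext fun l => by simp only [hf, g, mul_assoc]
  have hg : IntegrableOn g (Ioi 0) :=
    (integrable_sq_sub_one_mul_exp.comp_sub_right x).integrableOn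
  have hbdd : ∀ y, |g y| ≤ 2 := fun y => abs_sq_sub_one_mul_exp_le_two (y - x)
  have hg0 : g 0 < 0 := mul_neg_of_neg_of_pos (by nlinarith) (exp_pos _)
  refine ⟨?_, mul_pos (neg_pos.2 hx0) (exp_pos _), ?_⟩
  · rw [hfg, ← integral_Ioi_zero_sq_sub_one_mul_exp x]
    exact tendsto_integral_rpow_neg_mul_nhdsGT_zero hg hbdd
  · rw [hfg]
    exact tendsto_integral_rpow_neg_mul_nhdsLT_half hg hbdd (by fun_prop) hg0
end
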